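/- arXiv:2109.10872 — 4 statements merged into one kernel-verified Lean document; each statement's English description precedes it below -/
import Mathlib

section
/- Let Q = Σ_{i=1}^N ρᵢ rᵢrᵢ^T + ρ_{N+1} g g^T with ρᵢ > 0 for all i ∈ {1,…,N+1}, where rᵢ, g ∈ ℝ^3. If there exist two indices i ≠ j in {1,…,N} such that rᵢ and rⱼ are linearly independent (non-collinear), then the matrix Q̄ := tr(Q)I₃ − Q is positive definite. -/
/-!
`tr(Q) I₃ − Q = Σ ρᵢ (‖rᵢ‖² I₃ − rᵢ rᵢᵀ) + ρ_{N+1} (‖g‖² I₃ − g gᵀ)`, and the quadratic form of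
`‖v‖² I₃ − v vᵀ` at `x` is the Gram determinant `‖v‖²‖x‖² − (v ⬝ x)²`. It is nonnegative by
Cauchy–Schwarz and, for `x ≠ 0`, vanishes only when `v` is a multiple of `x`. Two linearly
independent `rᵢ, rⱼ` cannot both be multiples of the same `x ≠ 0`, so at every `x ≠ 0` one
summand of the quadratic form is strictly positive.
-/

open Matrix

noncomputable section

/-- Skew-symmetric matrix `x^×` associated to `x ∈ ℝ³`. -/
def skew (x : Fin 3 → ℝ) : Matrix (Fin 3) (Fin 3) ℝ :=
  !![0, -x 2, x 1; x 2, 0, -x 0; -x 1, x 0, 0]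

/-- `ψ(A) = vec((A - Aᵀ)/2)`, the vector of the anti-symmetric part of `A`. -/
def psi (A : Matrix (Fin 3) (Fin 3) ℝ) : Fin 3 → ℝ :=
  ![(A 2 1 - A 1 2) / 2, (A 0 2 - A 2 0) / 2, (A 1 0 - A 0 1) / 2]

open Finset

section

variable {n : Type*} [Fintype n]

section GramDet

variable {R : Type*}

/-- For `v, x ∈ ℝ³` this is `‖v × x‖² = xᵀ(-(v^×)²)x`. -/
def gramDet [CommRing R] (v x : n → R) : R :=
  (v ⬝ᵥ v) * (x ⬝ᵥ x) - (v ⬝ᵥ x) ^ 2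

theorem dotProduct_self_mul_gramDet [CommRing R] (v x : n → R) :
    (x ⬝ᵥ x) * gramDet v x =
      ((x ⬝ᵥ x) • v - (v ⬝ᵥ x) • x) ⬝ᵥ ((x ⬝ᵥ x) • v - (v ⬝ᵥ x) • x) := by
  simp only [gramDet, sub_dotProduct, dotProduct_sub, smul_dotProduct, dotProduct_smul,
    smul_eq_mul, dotProduct_comm x v]
  ring

variable [Field R] [LinearOrder R] [IsStrictOrderedRing R]

theorem gramDet_nonneg (v x : n → R) : 0 ≤ gramDet v x :=
  sub_nonneg.2 <| by simpa [dotProduct, sq] using sum_mul_sq_le_sq_mul_sq univ v x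

theorem exists_eq_smul_of_gramDet_eq_zero {v x : n → R} (hx : x ≠ 0) (h : gramDet v x = 0) :
    ∃ a : R, v = a • x := by
  have hxx : x ⬝ᵥ x ≠ 0 := fun h0 => hx (dotProduct_self_eq_zero.1 h0)
  have hcomb : (x ⬝ᵥ x) • v = (v ⬝ᵥ x) • x := by
    rw [← sub_eq_zero, ← dotProduct_self_eq_zero, ← dotProduct_self_mul_gramDet, h, mul_zero]
  exact ⟨(v ⬝ᵥ x) / (x ⬝ᵥ x), by rw [div_eq_inv_mul, ← smul_smul, ← hcomb, inv_smul_smul₀ hxx]⟩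

theorem gramDet_pos_or_gramDet_pos {u v x : n → R} (huv : LinearIndependent R ![u, v])
    (hx : x ≠ 0) : 0 < gramDet u x ∨ 0 < gramDet v x := by
  by_contra! h
  obtain ⟨a, rfl⟩ := exists_eq_smul_of_gramDet_eq_zero hx (h.1.antisymm (gramDet_nonneg u x))
  obtain ⟨b, rfl⟩ := exists_eq_smul_of_gramDet_eq_zero hx (h.2.antisymm (gramDet_nonneg v x))
  obtain ⟨-, ha⟩ := LinearIndependent.pair_iff.1 huv b (-a) (by module)
  exact huv.ne_zero 0 (by simp [neg_eq_zero.1 ha])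

end GramDet

section TraceComplement

variable {R : Type*} [CommRing R] [DecidableEq n]

@[simps]
def traceComplementForm (x : n → R) : Matrix n n R →ₗ[R] R where
  toFun M := x ⬝ᵥ ((M.trace • 1 - M) *ᵥ x)
  map_add' M N := by
    simp only [trace_add, add_smul, sub_mulVec, add_mulVec, dotProduct_sub, dotProduct_add]
    ring
  map_smul' c M := by
    simp only [trace_smul, smul_eq_mul, sub_mulVec, smul_mulVec, one_mulVec, dotProduct_sub,
      dotProduct_smul, RingHom.id_apply]
    ring

theorem traceComplementForm_vecMulVec_self (v x : n → R) :
    traceComplementForm x (vecMulVec v v) = gramDet v x := by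
  simp [traceComplementForm, gramDet, sub_mulVec, smul_mulVec, vecMulVec_mulVec,
    dotProduct_comm x v]
  ring

end TraceComplement

theorem isHermitian_vecMulVec_self (v : n → ℝ) : (vecMulVec v v).IsHermitian := by
  simpa using posSemidef_vecMulVec_self_star v |>.isHermitian

end

theorem stmt3_general (N : ℕ) (ρ : Fin N → ℝ) (ρg : ℝ) (r : Fin N → Fin 3 → ℝ) (g : Fin 3 → ℝ)
    (hρ : ∀ i, 0 < ρ i) (hρg : 0 < ρg)
    (Q : Matrix (Fin 3) (Fin 3) ℝ)
    (hQ : Q = ∑ i, ρ i • Matrix.vecMulVec (r i) (r i) + ρg • Matrix.vecMulVec g g)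
    (i j : Fin N)
    (hindep : LinearIndependent ℝ ![r i, r j]) :
    (Q.trace • (1 : Matrix (Fin 3) (Fin 3) ℝ) - Q).PosDef := by
  have hQ_herm : Q.IsHermitian := by
    rw [hQ]
    exact (isSelfAdjoint_sum univ fun k _ =>
      (isHermitian_vecMulVec_self (r k)).smul (IsSelfAdjoint.all (ρ k))).add
        ((isHermitian_vecMulVec_self g).smul (IsSelfAdjoint.all ρg))
  refine posDef_iff_dotProduct_mulVec.2
    ⟨(isHermitian_one.smul (.all _)).sub hQ_herm, fun x hx => ?_⟩
  have hform : star x ⬝ᵥ ((Q.trace • 1 - Q) *ᵥ x) =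
      ∑ k, ρ k * gramDet (r k) x + ρg * gramDet g x := by
    rw [star_trivial, ← traceComplementForm_apply, hQ, map_add, map_sum]
    simp only [map_smul, traceComplementForm_vecMulVec_self, smul_eq_mul]
  obtain ⟨k, hk⟩ : ∃ k, 0 < gramDet (r k) x :=
    (gramDet_pos_or_gramDet_pos hindep hx).elim (⟨i, ·⟩) (⟨j, ·⟩)
  have hsum : 0 < ∑ k, ρ k * gramDet (r k) x :=
    sum_pos' (fun k _ => mul_nonneg (hρ k).le (gramDet_nonneg _ x))
      ⟨k, mem_univ k, mul_pos (hρ k) hk⟩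
  rw [hform]
  exact add_pos_of_pos_of_nonneg hsum (mul_nonneg hρg.le (gramDet_nonneg g x))

/-- If two of the inertial vectors are non-collinear, then `tr(Q)I₃ − Q` is
positive definite. -/
theorem stmt3 (N : ℕ) (ρ : Fin N → ℝ) (ρg : ℝ) (r : Fin N → Fin 3 → ℝ) (g : Fin 3 → ℝ)
    (hρ : ∀ i, 0 < ρ i) (hρg : 0 < ρg)
    (Q : Matrix (Fin 3) (Fin 3) ℝ)
    (hQ : Q = ∑ i, ρ i • Matrix.vecMulVec (r i) (r i) + ρg • Matrix.vecMulVec g g)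
    (i j : Fin N) (hij : i ≠ j)
    (hindep : LinearIndependent ℝ ![r i, r j]) :
    (Q.trace • (1 : Matrix (Fin 3) (Fin 3) ℝ) - Q).PosDef :=
  stmt3_general N ρ ρg r g hρ hρg Q hQ i j hindep
end
end

section
/- Let Q = Σ_{i=1}^N ρᵢ rᵢrᵢ^T + ρ_{N+1} g g^T with ρᵢ > 0 for all i ∈ {1,…,N+1}. If there exists some index i ∈ {1,…,N} such that rᵢ and the vector g are linearly independent, then Q̄ := tr(Q)I₃ − Q is positive definite. -/
/-!
Since `tr(u uᵀ) I − u uᵀ = (u^×)ᵀ u^×`, the matrix `Q̄` is the positive combination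
`∑ ρⱼ (rⱼ^×)ᵀ rⱼ^× + ρ_{N+1} (g^×)ᵀ g^×`, whose quadratic form is
`∑ ρⱼ ‖rⱼ × x‖² + ρ_{N+1} ‖g × x‖²`. If this vanished at some `x ≠ 0`, both `rᵢ` and `g` would
be parallel to `x`, contradicting their linear independence.
-/

open Matrix

noncomputable section

def inertiaMap (n R : Type*) [Fintype n] [DecidableEq n] [CommRing R] :
    Matrix n n R →ₗ[R] Matrix n n R :=
  (traceLinearMap n R R).smulRight 1 - LinearMap.id

lemma inertiaMap_apply {n R : Type*} [Fintype n] [DecidableEq n] [CommRing R]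
    (Q : Matrix n n R) : inertiaMap n R Q = Q.trace • 1 - Q :=
  rfl

lemma skew_mulVec (u x : Fin 3 → ℝ) : skew u *ᵥ x = u ⨯₃ x := by
  ext k
  fin_cases k <;> simp [skew, crossProduct, mulVec, dotProduct, Fin.sum_univ_three] <;> ring

lemma inertiaMap_vecMulVec_self (u : Fin 3 → ℝ) :
    inertiaMap (Fin 3) ℝ (vecMulVec u u) = (skew u)ᴴ * skew u := by
  ext j k
  fin_cases j <;> fin_cases k <;>
    simp [inertiaMap_apply, skew, trace, vecMulVec_apply, Matrix.mul_apply,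
      Fin.sum_univ_three] <;> ring

lemma dotProduct_conjTranspose_skew_mul_skew_mulVec (u x : Fin 3 → ℝ) :
    x ⬝ᵥ ((skew u)ᴴ * skew u) *ᵥ x = (u ⨯₃ x) ⬝ᵥ (u ⨯₃ x) := by
  rw [← mulVec_mulVec, dotProduct_mulVec, vecMul_conjTranspose, star_trivial, skew_mulVec,
    skew_mulVec, star_trivial]

lemma exists_smul_eq_of_cross_eq_zero {u x : Fin 3 → ℝ} (hx : x ≠ 0) (h : u ⨯₃ x = 0) :
    ∃ a : ℝ, a • x = u := by
  have hdep : ¬ LinearIndependent ℝ ![u, x] :=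
    fun hli => crossProduct_ne_zero_iff_linearIndependent.mpr hli h
  rw [linearIndependent_fin2] at hdep
  push Not at hdep
  simpa using hdep (by simpa using hx)

lemma cross_eq_zero_of_cross_eq_zero {u v x : Fin 3 → ℝ} (hx : x ≠ 0) (hu : u ⨯₃ x = 0)
    (hv : v ⨯₃ x = 0) : u ⨯₃ v = 0 := by
  obtain ⟨a, rfl⟩ := exists_smul_eq_of_cross_eq_zero hx hu
  obtain ⟨b, rfl⟩ := exists_smul_eq_of_cross_eq_zero hx hv
  simp [cross_self]

lemma posDef_smul_gram_skew_add_smul_gram_skew {u v : Fin 3 → ℝ}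
    (huv : LinearIndependent ℝ ![u, v]) {a b : ℝ} (ha : 0 < a) (hb : 0 < b) :
    (a • ((skew u)ᴴ * skew u) + b • ((skew v)ᴴ * skew v)).PosDef := by
  have hpsd := ((posSemidef_conjTranspose_mul_self (skew u)).smul ha.le).add
    ((posSemidef_conjTranspose_mul_self (skew v)).smul hb.le)
  refine posDef_iff_dotProduct_mulVec.mpr ⟨hpsd.isHermitian, fun x hx => ?_⟩
  simp only [star_trivial, add_mulVec, smul_mulVec, dotProduct_add, dotProduct_smul, smul_eq_mul,
    dotProduct_conjTranspose_skew_mul_skew_mulVec]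
  have hcross : u ⨯₃ x ≠ 0 ∨ v ⨯₃ x ≠ 0 := by
    by_contra! h
    exact crossProduct_ne_zero_iff_linearIndependent.mpr huv
      (cross_eq_zero_of_cross_eq_zero hx h.1 h.2)
  have hnonneg (w : Fin 3 → ℝ) : 0 ≤ w ⬝ᵥ w := by simpa using dotProduct_star_self_nonneg w
  have hpos {w : Fin 3 → ℝ} (hw : w ≠ 0) : 0 < w ⬝ᵥ w := by
    simpa using dotProduct_star_self_pos_iff.mpr hw
  rcases hcross with h | h
  · exact add_pos_of_pos_of_nonneg (mul_pos ha (hpos h)) (mul_nonneg hb.le (hnonneg _))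
  · exact add_pos_of_nonneg_of_pos (mul_nonneg ha.le (hnonneg _)) (mul_pos hb (hpos h))

/-- If some inertial vector is non-collinear with the gravity vector `g`, then
`tr(Q)I₃ − Q` is positive definite. -/
theorem stmt4 (N : ℕ) (ρ : Fin N → ℝ) (ρg : ℝ) (r : Fin N → Fin 3 → ℝ) (g : Fin 3 → ℝ)
    (hρ : ∀ i, 0 < ρ i) (hρg : 0 < ρg)
    (Q : Matrix (Fin 3) (Fin 3) ℝ)
    (hQ : Q = ∑ i, ρ i • Matrix.vecMulVec (r i) (r i) + ρg • Matrix.vecMulVec g g)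
    (i : Fin N) (hindep : LinearIndependent ℝ ![r i, g]) :
    (Q.trace • (1 : Matrix (Fin 3) (Fin 3) ℝ) - Q).PosDef := by
  have hQbar : Q.trace • 1 - Q = ρ i • ((skew (r i))ᴴ * skew (r i)) + ρg • ((skew g)ᴴ * skew g)
      + ∑ j ∈ Finset.univ.erase i, ρ j • ((skew (r j))ᴴ * skew (r j)) := by
    rw [← inertiaMap_apply, hQ, map_add, map_sum, ← Finset.add_sum_erase _ _ (Finset.mem_univ i)]
    simp only [map_smul, inertiaMap_vecMulVec_self]
    abel
  rw [hQbar]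
  exact (posDef_smul_gram_skew_add_smul_gram_skew hindep (hρ i) hρg).add_posSemidef
    (posSemidef_sum _ fun j _ => (posSemidef_conjTranspose_mul_self _).smul (hρ j).le)
end
end

section
/- For every R ∈ SO(3), ‖ψ(R)‖² = 4(1 − |R|_I²)|R|_I², where |R|_I² := tr(I₃ − R)/4; in particular ‖ψ(R)‖² ≤ 1. -/
/-!
For a rotation `R` the adjugate is the transpose, so the `3 × 3` identity
`2 tr (adj A) = (tr A)² - tr (A²)` gives `tr (R²) = t² - 2t` with `t = tr R`. Combined with
`4 ‖ψ(A)‖² = tr (Aᵀ A) - tr (A²)` and `tr (Rᵀ R) = 3` this yields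
`4 ‖ψ(R)‖² = (3 - t)(1 + t) = 4 - (t - 1)²`.
-/

open Matrix

noncomputable section

theorem Matrix.adjugate_eq_transpose_of_transpose_mul_self {n α : Type*} [Fintype n]
    [DecidableEq n] [CommRing α] {A : Matrix n n α} (hA : Aᵀ * A = 1) (hdet : A.det = 1) :
    A.adjugate = Aᵀ := by
  calc A.adjugate = Aᵀ * A * A.adjugate := by rw [hA, Matrix.one_mul]
    _ = Aᵀ := by rw [Matrix.mul_assoc, mul_adjugate, hdet, one_smul, Matrix.mul_one]

theorem Matrix.two_mul_trace_adjugate_fin_three {α : Type*} [CommRing α]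
    (A : Matrix (Fin 3) (Fin 3) α) :
    2 * A.adjugate.trace = A.trace ^ 2 - (A * A).trace := by
  simp only [adjugate_fin_three, trace_fin_three, mul_apply, Fin.sum_univ_three, of_apply,
    cons_val', cons_val_zero, cons_val_one, cons_val_two, empty_val', cons_val_fin_one,
    head_cons, tail_cons, head_fin_const]
  ring

theorem four_mul_psi_dotProduct_self (A : Matrix (Fin 3) (Fin 3) ℝ) :
    4 * (psi A ⬝ᵥ psi A) = (Aᵀ * A).trace - (A * A).trace := by
  simp only [psi, dotProduct, trace_fin_three, mul_apply, transpose_apply, Fin.sum_univ_three,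
    cons_val_zero, cons_val_one, cons_val_two, head_cons, tail_cons]
  ring

theorem four_mul_psi_dotProduct_self_of_mem_SO3 {R : Matrix (Fin 3) (Fin 3) ℝ}
    (hR : Rᵀ * R = 1) (hdet : R.det = 1) :
    4 * (psi R ⬝ᵥ psi R) = (3 - R.trace) * (1 + R.trace) := by
  have htr : (R * R).trace = R.trace ^ 2 - 2 * R.trace := by
    have hadj := R.two_mul_trace_adjugate_fin_three
    rw [adjugate_eq_transpose_of_transpose_mul_self hR hdet, trace_transpose] at hadj
    linarith
  rw [four_mul_psi_dotProduct_self, hR, htr, trace_one, Fintype.card_fin]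
  push_cast
  ring

/-- For `R ∈ SO(3)`, `‖ψ(R)‖² = 4(1 − |R|_I²)|R|_I²` where `|R|_I² = tr(I₃ − R)/4`;
in particular `‖ψ(R)‖² ≤ 1`. -/
theorem stmt5 (R : Matrix (Fin 3) (Fin 3) ℝ) (hR : Rᵀ * R = 1) (hdet : R.det = 1) :
    psi R ⬝ᵥ psi R
      = 4 * (1 - Matrix.trace (1 - R) / 4) * (Matrix.trace (1 - R) / 4) ∧
    psi R ⬝ᵥ psi R ≤ 1 := by
  have hpsi := four_mul_psi_dotProduct_self_of_mem_SO3 hR hdet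
  have htr : (1 - R).trace = 3 - R.trace := by
    rw [trace_sub, trace_one, Fintype.card_fin, Nat.cast_ofNat]
  rw [htr]
  constructor
  · linear_combination hpsi / 4
  · nlinarith [sq_nonneg (R.trace - 1)]
end
end

section
/- Let Q̄ be a symmetric positive definite 3×3 matrix. The set of R ∈ SO(3) satisfying ψ(Q̄ R) = 0 (equivalently Q̄R = R^T Q̄) equals {I₃} ∪ {R_a(π, v) : v a unit eigenvector of Q̄}, where R_a(θ,u) = I₃ + sin θ · u^× + (1 − cos θ)(u^×)² is the angle-axis rotation. -/
/-!
The condition `ψ(Q̄ R) = 0` says that `Q̄ R` is symmetric, i.e. that `R` is self-adjoint for the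
inner product `xᵀ Q̄ y`. For an orthogonal such `R` and `K = R - Rᵀ`, the trace of `Kᵀ Q̄ K`
vanishes, so `K = 0` because `Q̄` is positive definite: `R` is a symmetric rotation and `R² = 1`.
In dimension three Cayley–Hamilton then reduces to `(1 + tr R) (R - 1) = 0`. If `tr R = -1`, then
`(1 + R) / 2` is a symmetric idempotent of trace one, hence `v vᵀ` for a unit vector `v`, and
`R = 2 v vᵀ - 1 = R_a(π, v)`. Finally `Q̄` commutes with `R`, hence with `v vᵀ`, which says
exactly that `v` is an eigenvector of `Q̄`.
-/

open Matrix

noncomputable section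

/-- Angle-axis rotation `R_a(θ,u) = I₃ + sin θ • u^× + (1 − cos θ)(u^×)²`. -/
def Ra (θ : ℝ) (u : Fin 3 → ℝ) : Matrix (Fin 3) (Fin 3) ℝ :=
  1 + Real.sin θ • skew u + (1 - Real.cos θ) • (skew u * skew u)

namespace Matrix

section PosDef

open scoped ComplexOrder

variable {n 𝕜 : Type*} [Fintype n] [DecidableEq n] [RCLike 𝕜]

theorem PosDef.eq_zero_of_conjTranspose_mul_mul_eq_zero {Q K : Matrix n n 𝕜} (hQ : Q.PosDef)
    (h : Kᴴ * Q * K = 0) : K = 0 := by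
  refine ext_of_mulVec_single fun i => ?_
  rw [zero_mulVec]
  by_contra hK
  have hpos := hQ.dotProduct_mulVec_pos hK
  rw [star_mulVec, ← dotProduct_mulVec, mulVec_mulVec, mulVec_mulVec, h] at hpos
  simp at hpos

theorem PosDef.isHermitian_of_isHermitian_mul {Q R : Matrix n n 𝕜} (hQ : Q.PosDef)
    (hR : R ∈ unitaryGroup n 𝕜) (hQR : (Q * R).IsHermitian) : R.IsHermitian := by
  have hRR : Rᴴ * R = 1 := mem_unitaryGroup_iff'.mp hR
  have hRR' : R * Rᴴ = 1 := mem_unitaryGroup_iff.mp hR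
  have hQ' : Qᴴ = Q := hQ.isHermitian
  have hQR' : Rᴴ * Q = Q * R := by
    simpa [IsHermitian, conjTranspose_mul, hQ'] using hQR
  have hRQR : R * Q * R = Q := by
    rw [Matrix.mul_assoc, ← hQR', ← Matrix.mul_assoc, hRR', Matrix.one_mul]
  have hRQR' : Rᴴ * Q * Rᴴ = Q := by
    simpa [conjTranspose_mul, hQ', Matrix.mul_assoc] using congrArg (·ᴴ) hRQR
  set K := R - Rᴴ
  have hK : (Kᴴ * Q * K).trace = 0 := by
    have hexpand : Kᴴ * Q * K = Rᴴ * Q * R - Rᴴ * Q * Rᴴ - R * Q * R + R * Q * Rᴴ := by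
      simp only [K, conjTranspose_sub, conjTranspose_conjTranspose]
      noncomm_ring
    rw [hexpand, hRQR, hRQR', trace_add, trace_sub, trace_sub, trace_mul_cycle, hRR',
      Matrix.one_mul, trace_mul_comm, ← Matrix.mul_assoc, hRR, Matrix.one_mul]
    ring
  have hK0 : K = 0 := hQ.eq_zero_of_conjTranspose_mul_mul_eq_zero
    (((hQ.posSemidef.conjTranspose_mul_mul_same K).trace_eq_zero_iff).mp hK)
  exact (sub_eq_zero.mp hK0).symm

end PosDef

section VecMulVec

variable {n R : Type*} [Fintype n] [CommRing R] {v : n → R}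

theorem transpose_mul_eq_self_iff_commute {A B : Matrix n n R} (hA : Aᵀ = A) (hB : Bᵀ = B) :
    (A * B)ᵀ = A * B ↔ Commute A B := by
  rw [transpose_mul, hA, hB, eq_comm]
  rfl

theorem commute_vecMulVec_self_iff {Q : Matrix n n R} (hQ : Qᵀ = Q) (hv : v ⬝ᵥ v = 1) :
    Commute Q (vecMulVec v v) ↔ ∃ μ : R, Q *ᵥ v = μ • v := by
  constructor
  · intro h
    refine ⟨v ⬝ᵥ (Q *ᵥ v), ?_⟩
    simpa [← mulVec_mulVec, vecMulVec_mulVec, hv] using congrArg (· *ᵥ v) h.eq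
  · rintro ⟨μ, hμ⟩
    have hvQ : v ᵥ* Q = μ • v := by rw [← hQ, vecMul_transpose, hμ]
    rw [Commute, SemiconjBy, mul_vecMulVec, vecMulVec_mul, hμ, hvQ, smul_vecMulVec,
      vecMulVec_smul]

variable [DecidableEq n]

theorem two_smul_vecMulVec_self_sub_one_mul_self (hv : v ⬝ᵥ v = 1) :
    (2 • vecMulVec v v - 1) * (2 • vecMulVec v v - 1) = 1 := by
  have hX : vecMulVec v v * vecMulVec v v = vecMulVec v v := by
    rw [vecMulVec_mul_vecMulVec, hv, one_smul]
  simp only [sub_mul, mul_sub, Matrix.smul_mul, Matrix.mul_smul, hX, Matrix.one_mul,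
    Matrix.mul_one]
  module

theorem det_two_smul_vecMulVec_self_sub_one (hv : v ⬝ᵥ v = 1) :
    det (2 • vecMulVec v v - 1) = -(-1 : R) ^ Fintype.card n := by
  have h : (2 • vecMulVec v v - 1 : Matrix n n R) =
      -(1 + replicateCol Unit ((-2 : R) • v) * replicateRow Unit v) := by
    rw [← vecMulVec_eq, smul_vecMulVec]
    module
  rw [h, det_neg, det_one_add_replicateCol_mul_replicateRow, dotProduct_smul, hv]
  ring

end VecMulVec

theorem commute_two_smul_sub_one_iff {n K : Type*} [Fintype n] [DecidableEq n] [Field K]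
    [NeZero (2 : K)] {A B : Matrix n n K} : Commute A (2 • B - 1) ↔ Commute A B := by
  refine ⟨fun h => ?_, fun h => (h.smul_right 2).sub_right (Commute.one_right A)⟩
  have h2 : Commute A ((2 : K) • B) := by
    simpa only [ofNat_smul_eq_nsmul, sub_add_cancel] using h.add_right (Commute.one_right A)
  simpa [two_ne_zero] using h2.smul_right (2 : K)⁻¹

theorem exists_eq_vecMulVec_of_isIdempotentElem_of_trace_eq_one {n : Type*} [Fintype n]
    {P : Matrix n n ℝ} (hsymm : Pᵀ = P) (hidem : IsIdempotentElem P) (htr : P.trace = 1) :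
    ∃ v : n → ℝ, v ⬝ᵥ v = 1 ∧ P = vecMulVec v v := by
  have hPP : Pᵀ * P = P := by rw [hsymm]; exact hidem
  have hdiag (i : n) : P i i = (fun j => P j i) ⬝ᵥ (fun j => P j i) := by
    conv_lhs => rw [← hPP]
    rfl
  obtain ⟨i, hi⟩ : ∃ i, 0 < P i i := by
    by_contra! h
    have : P.trace ≤ 0 := Finset.sum_nonpos fun i _ => h i
    linarith
  set a := P i i
  set c : n → ℝ := fun j => P j i
  have hcc : c ⬝ᵥ c = a := (hdiag i).symm
  have hPc : P *ᵥ c = c := by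
    ext j
    simpa [mulVec, dotProduct, mul_apply] using congrFun (congrFun hidem j) i
  have hcP : c ᵥ* P = c := by
    conv_lhs => rw [← hsymm]
    rw [vecMul_transpose, hPc]
  -- `W` is symmetric with `W * W = a • W` and trace `0`, hence has zero Frobenius norm
  set W := a • P - vecMulVec c c
  have hWsymm : Wᵀ = W := by simp [W, transpose_vecMulVec, hsymm]
  have hWW : W * W = a • W := by
    have hXX : vecMulVec c c * vecMulVec c c = a • vecMulVec c c := by
      rw [vecMulVec_mul_vecMulVec, hcc, vecMulVec_smul]
    simp only [W, sub_mul, mul_sub, Matrix.smul_mul, Matrix.mul_smul, hidem.eq, mul_vecMulVec,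
      vecMulVec_mul, smul_mulVec, hPc, hcP, hXX, smul_vecMulVec]
    module
  have hW : W = 0 := by
    rw [← trace_conjTranspose_mul_self_eq_zero_iff, conjTranspose_eq_transpose_of_trivial,
      hWsymm, hWW, trace_smul, trace_sub, trace_smul, htr, trace_vecMulVec, hcc]
    simp
  refine ⟨(√a)⁻¹ • c, ?_, ?_⟩
  · rw [smul_dotProduct, dotProduct_smul, hcc, smul_eq_mul, smul_eq_mul, ← mul_assoc,
      ← mul_inv, Real.mul_self_sqrt hi.le, inv_mul_cancel₀ hi.ne']
  · rw [smul_vecMulVec, vecMulVec_smul, smul_smul, ← mul_inv, Real.mul_self_sqrt hi.le,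
      ← sub_eq_zero.mp hW, smul_smul, inv_mul_cancel₀ hi.ne', one_smul]

theorem cayley_hamilton_fin_three {R : Type*} [CommRing R] (A : Matrix (Fin 3) (Fin 3) R) :
    A * A * A - A.trace • (A * A) + A.adjugate.trace • A - A.det • 1 = 0 := by
  ext i j
  fin_cases i <;> fin_cases j <;>
    simp [trace_fin_three, det_fin_three, adjugate_fin_three, mul_apply, Fin.sum_univ_three] <;>
    ring

theorem eq_one_or_trace_eq_neg_one_of_mul_self_eq_one {R : Matrix (Fin 3) (Fin 3) ℝ}
    (hR : R * R = 1) (hdet : R.det = 1) : R = 1 ∨ R.trace = -1 := by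
  have hadj : R.adjugate = R := by
    calc R.adjugate = R.adjugate * R * R := by rw [Matrix.mul_assoc, hR, Matrix.mul_one]
      _ = R := by rw [adjugate_mul, hdet, one_smul, Matrix.one_mul]
  have h := cayley_hamilton_fin_three R
  rw [hadj, hR, hdet, Matrix.one_mul, one_smul] at h
  have hfactor : (1 + R.trace) • (R - 1) = 0 := by rw [← h]; module
  rcases smul_eq_zero.mp hfactor with ht | hR1
  · exact Or.inr (by linarith)
  · exact Or.inl (sub_eq_zero.mp hR1)

theorem eq_one_or_exists_eq_two_smul_vecMulVec_sub_one {R : Matrix (Fin 3) (Fin 3) ℝ}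
    (hsymm : Rᵀ = R) (hR : R * R = 1) (hdet : R.det = 1) :
    R = 1 ∨ ∃ v : Fin 3 → ℝ, v ⬝ᵥ v = 1 ∧ R = 2 • vecMulVec v v - 1 := by
  refine (eq_one_or_trace_eq_neg_one_of_mul_self_eq_one hR hdet).imp_right fun htr => ?_
  obtain ⟨v, hv, hP⟩ := exists_eq_vecMulVec_of_isIdempotentElem_of_trace_eq_one
    (P := (2⁻¹ : ℝ) • (1 + R)) (by simp [hsymm])
    (by
      simp only [IsIdempotentElem, Matrix.smul_mul, Matrix.mul_smul, add_mul, mul_add,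
        Matrix.one_mul, Matrix.mul_one, hR]
      module)
    (by rw [trace_smul, trace_add, htr, trace_one]; norm_num)
  refine ⟨v, hv, ?_⟩
  rw [← hP]
  module

end Matrix

theorem skew_mul_skew (v : Fin 3 → ℝ) :
    skew v * skew v = vecMulVec v v - (v ⬝ᵥ v) • 1 := by
  ext i j
  fin_cases i <;> fin_cases j <;>
    simp [skew, vecMulVec, dotProduct, mul_apply, Fin.sum_univ_three] <;> ring

theorem Ra_pi_eq_two_smul_vecMulVec_sub_one {v : Fin 3 → ℝ} (hv : v ⬝ᵥ v = 1) :
    Ra Real.pi v = 2 • vecMulVec v v - 1 := by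
  rw [Ra, Real.sin_pi, Real.cos_pi, skew_mul_skew, hv]
  module

theorem psi_eq_zero_iff (A : Matrix (Fin 3) (Fin 3) ℝ) : psi A = 0 ↔ Aᵀ = A := by
  simp [psi, funext_iff, ← Matrix.ext_iff, Fin.forall_fin_succ, sub_eq_zero]
  grind

theorem stmt8_general (Qb : Matrix (Fin 3) (Fin 3) ℝ) (hpd : Qb.PosDef) :
    {R : Matrix (Fin 3) (Fin 3) ℝ | Rᵀ * R = 1 ∧ R.det = 1 ∧ psi (Qb * R) = 0}
      = {1} ∪ {R | ∃ v : Fin 3 → ℝ, v ⬝ᵥ v = 1 ∧ (∃ μ : ℝ, Qb *ᵥ v = μ • v) ∧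
          R = Ra Real.pi v} := by
  have hQ : Qbᵀ = Qb := by simpa using hpd.isHermitian.eq
  ext R
  simp only [Set.mem_ofPred_eq, Set.mem_union, Set.mem_singleton_iff, psi_eq_zero_iff]
  constructor
  · rintro ⟨horth, hdet, hQR⟩
    have hR : Rᵀ = R := by
      rw [← conjTranspose_eq_transpose_of_trivial]
      exact (hpd.isHermitian_of_isHermitian_mul (mem_unitaryGroup_iff'.mpr (by simpa))
        (by simpa [IsHermitian] using hQR)).eq
    rcases eq_one_or_exists_eq_two_smul_vecMulVec_sub_one hR (by rwa [hR] at horth) hdet with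
      rfl | ⟨v, hv, rfl⟩
    · exact Or.inl rfl
    · refine Or.inr ⟨v, hv, ?_, (Ra_pi_eq_two_smul_vecMulVec_sub_one hv).symm⟩
      exact (commute_vecMulVec_self_iff hQ hv).mp
        (commute_two_smul_sub_one_iff.mp ((transpose_mul_eq_self_iff_commute hQ hR).mp hQR))
  · rintro (rfl | ⟨v, hv, hμ, rfl⟩)
    · simp [hQ]
    · have hR : (2 • vecMulVec v v - 1)ᵀ = 2 • vecMulVec v v - 1 := by
        simp only [transpose_sub, transpose_smul, transpose_one, transpose_vecMulVec]
      rw [Ra_pi_eq_two_smul_vecMulVec_sub_one hv, hR, two_smul_vecMulVec_self_sub_one_mul_self hv,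
        det_two_smul_vecMulVec_self_sub_one hv, transpose_mul_eq_self_iff_commute hQ hR,
        commute_two_smul_sub_one_iff, commute_vecMulVec_self_iff hQ hv]
      exact ⟨rfl, by norm_num, hμ⟩

/-- For symmetric positive definite `Q̄`, the set of `R ∈ SO(3)` with `ψ(Q̄R) = 0`
equals `{I₃} ∪ {R_a(π,v) : v a unit eigenvector of Q̄}`. -/
theorem stmt8 (Qb : Matrix (Fin 3) (Fin 3) ℝ) (hsym : Qbᵀ = Qb) (hpd : Qb.PosDef) :
    {R : Matrix (Fin 3) (Fin 3) ℝ | Rᵀ * R = 1 ∧ R.det = 1 ∧ psi (Qb * R) = 0}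
      = {1} ∪ {R | ∃ v : Fin 3 → ℝ, v ⬝ᵥ v = 1 ∧ (∃ μ : ℝ, Qb *ᵥ v = μ • v) ∧
          R = Ra Real.pi v} :=
  stmt8_general Qb hpd
end
end
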